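/- Let n : [−1,1] → ℝ² be continuously differentiable with |n(t)| = 1 for all t ∈ [−1,1], n(−1) = (0,1) and n(1) = (0,−1). Then ∫_{−1}^{1} |n'(t)|² dt ≥ π²/2. -/

import Mathlib

/-!
Identify `ℝ²` with `ℂ`. For a nonvanishing path `γ`, the function `γ t * exp (-∫ₐᵗ γ'/γ)` has
zero derivative, so `γ b = γ a * exp L` with `L = ∫ₐᵇ γ'/γ`. From `(0,1)` to `(0,-1)` this forces
`exp L = -1`, hence `L ∈ (2ℤ + 1)πi` and `π ≤ ‖L‖ ≤ ∫ ‖γ'/γ‖ = ∫ ‖n'‖` since `‖γ‖ = 1`.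
Cauchy–Schwarz on an interval of length `2` then gives `π² ≤ (∫ ‖n'‖)² ≤ 2 ∫ ‖n'‖²`.
-/

open Set Real Complex intervalIntegral

theorem pi_le_norm_of_exp_eq_neg_one {z : ℂ} (h : cexp z = -1) : π ≤ ‖z‖ := by
  obtain ⟨k, hk⟩ : ∃ k : ℤ, z - π * I = k * (2 * π * I) := by
    rw [← Complex.exp_eq_one_iff, Complex.exp_sub, h, exp_pi_mul_I, div_self (by norm_num)]
  have hz : z = ((2 * k + 1 : ℤ) : ℝ) * π * I := by
    push_cast; linear_combination hk
  have hodd : (1 : ℝ) ≤ |((2 * k + 1 : ℤ) : ℝ)| := by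
    rw [← Int.cast_abs]; exact_mod_cast Int.one_le_abs (by omega)
  rw [hz, norm_mul, norm_mul, Complex.norm_I, mul_one, Complex.norm_real, Complex.norm_real,
    Real.norm_eq_abs, Real.norm_of_nonneg pi_pos.le]
  nlinarith [pi_pos]

theorem sq_integral_le_mul_integral_sq {f : ℝ → ℝ} {a b : ℝ} (hab : a ≤ b)
    (hf : IntervalIntegrable f MeasureTheory.volume a b)
    (hf2 : IntervalIntegrable (fun t => f t ^ 2) MeasureTheory.volume a b) :
    (∫ t in a..b, f t) ^ 2 ≤ (b - a) * ∫ t in a..b, f t ^ 2 := by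
  set A := ∫ t in a..b, f t
  set B := ∫ t in a..b, f t ^ 2
  have hexpand : ∫ t in a..b, ((b - a) * f t - A) ^ 2 = (b - a) * ((b - a) * B - A ^ 2) := by
    have : (fun t => ((b - a) * f t - A) ^ 2)
        = fun t => (b - a) ^ 2 * f t ^ 2 - 2 * (b - a) * A * f t + A ^ 2 := by
      funext t; ring
    rw [this, integral_add ((hf2.const_mul _).sub (hf.const_mul _)) intervalIntegrable_const,
      integral_sub (hf2.const_mul _) (hf.const_mul _), integral_const_mul, integral_const_mul,
      integral_const, smul_eq_mul]
    ring
  have hnonneg : 0 ≤ (b - a) * ((b - a) * B - A ^ 2) :=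
    hexpand ▸ integral_nonneg hab fun t _ => sq_nonneg _
  rcases hab.eq_or_lt with rfl | hlt
  · simp [A]
  · nlinarith [(mul_nonneg_iff_of_pos_left (sub_pos.2 hlt)).1 hnonneg]

theorem eq_mul_exp_integral_div_of_hasDerivWithinAt {γ γ' : ℝ → ℂ} {a b : ℝ} (hab : a ≤ b)
    (hγ : ∀ t ∈ Icc a b, HasDerivWithinAt γ (γ' t) (Icc a b) t)
    (hγ' : ContinuousOn γ' (Icc a b)) (hne : ∀ t ∈ Icc a b, γ t ≠ 0) :
    γ b = γ a * cexp (∫ t in a..b, γ' t / γ t) := by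
  set g := fun t => γ' t / γ t
  have hg : ContinuousOn g (Icc a b) :=
    hγ'.div (fun t ht => (hγ t ht).continuousWithinAt) hne
  -- a continuous extension of `g` to all of `ℝ`, so that its primitive is differentiable everywhere
  set G := fun t => g (projIcc a b hab t)
  have hG : Continuous G :=
    hg.comp_continuous (continuous_subtype_val.comp continuous_projIcc)
      fun t => (projIcc a b hab t).2
  have hGg : ∀ t ∈ Icc a b, G t = g t := fun t ht => by simp [G, projIcc_of_mem hab ht]
  set Θ := fun t => ∫ s in a..t, G s
  set F := fun t => γ t * cexp (-Θ t)
  have hF : ∀ t ∈ Icc a b, HasDerivWithinAt F 0 (Icc a b) t := by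
    intro t ht
    have hΘ := (hG.integral_hasStrictDerivAt a t).hasDerivAt.hasDerivWithinAt (s := Icc a b)
    refine ((hγ t ht).mul hΘ.neg.cexp).congr_deriv ?_
    rw [hGg t ht]
    simp only [g]
    field_simp [hne t ht]
    ring
  have hFconst := constant_of_has_deriv_right_zero
    (fun t ht => (hF t ht).continuousWithinAt)
    (fun t ht => (hF t (Ico_subset_Icc_self ht)).mono_of_mem_nhdsWithin
      (Icc_mem_nhdsGE_of_mem ht)) b (right_mem_Icc.2 hab)
  have hΘb : Θ b = ∫ t in a..b, g t :=
    integral_congr fun t ht => hGg t (uIcc_of_le hab ▸ ht)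
  have hΘa : Θ a = 0 := integral_same
  simp only [F, hΘa, hΘb, neg_zero, Complex.exp_zero, mul_one] at hFconst
  rw [← hFconst, mul_assoc, ← Complex.exp_add, neg_add_cancel, Complex.exp_zero, mul_one]

theorem pi_le_integral_norm_deriv_of_norm_eq_one {γ γ' : ℝ → ℂ} {a b : ℝ} (hab : a ≤ b)
    (hγ : ∀ t ∈ Icc a b, HasDerivWithinAt γ (γ' t) (Icc a b) t)
    (hγ' : ContinuousOn γ' (Icc a b)) (hunit : ∀ t ∈ Icc a b, ‖γ t‖ = 1)
    (hantipodal : γ b = -γ a) : π ≤ ∫ t in a..b, ‖γ' t‖ := by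
  have hne : ∀ t ∈ Icc a b, γ t ≠ 0 := fun t ht => norm_ne_zero_iff.1 (by simp [hunit t ht])
  have hexp : cexp (∫ t in a..b, γ' t / γ t) = -1 := by
    have h := eq_mul_exp_integral_div_of_hasDerivWithinAt hab hγ hγ' hne
    rw [hantipodal, ← mul_neg_one] at h
    exact (mul_left_cancel₀ (hne a (left_mem_Icc.2 hab)) h).symm
  calc π ≤ ‖∫ t in a..b, γ' t / γ t‖ := pi_le_norm_of_exp_eq_neg_one hexp
    _ ≤ ∫ t in a..b, ‖γ' t / γ t‖ := norm_integral_le_integral_norm hab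
    _ = ∫ t in a..b, ‖γ' t‖ := integral_congr fun t ht => by
        simp [hunit t (uIcc_of_le hab ▸ ht)]

theorem stmt14 (n n' : ℝ → EuclideanSpace ℝ (Fin 2))
    (hderiv : ∀ t ∈ Set.Icc (-1 : ℝ) 1, HasDerivWithinAt n (n' t) (Set.Icc (-1) 1) t)
    (hcont : ContinuousOn n' (Set.Icc (-1) 1))
    (hunit : ∀ t ∈ Set.Icc (-1 : ℝ) 1, ‖n t‖ = 1)
    (hstart : n (-1) 0 = 0 ∧ n (-1) 1 = 1)
    (hend : n 1 0 = 0 ∧ n 1 1 = -1) :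
    Real.pi ^ 2 / 2 ≤ ∫ t in (-1 : ℝ)..1, ‖n' t‖ ^ 2 := by
  set e := Complex.orthonormalBasisOneI.repr.symm
  have hlength : π ≤ ∫ t in (-1 : ℝ)..1, ‖n' t‖ := by
    have h := pi_le_integral_norm_deriv_of_norm_eq_one (γ := fun t => e (n t))
      (γ' := fun t => e (n' t)) (by norm_num)
      (fun t ht => e.toContinuousLinearEquiv.hasFDerivAt.comp_hasDerivWithinAt t (hderiv t ht))
      (e.continuous.comp_continuousOn hcont) (fun t ht => by simpa using hunit t ht)
      (by simp [e, hstart, hend])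
    simpa using h
  have hcauchySchwarz := sq_integral_le_mul_integral_sq (f := fun t => ‖n' t‖) (by norm_num)
    (hcont.norm.intervalIntegrable_of_Icc (by norm_num))
    ((hcont.norm.pow 2).intervalIntegrable_of_Icc (by norm_num))
  nlinarith [pi_pos]
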